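/- arXiv:1212.5933 — 7 statements merged into one kernel-verified Lean document; each statement's English description precedes it below -/
import Mathlib

section
/- Let G be a finite simple graph on vertex set Fin n and let r, d be positive integers with r ≤ d. Then the constant vector with every component equal to r/d lies in STAB(G) (the convex hull in ℝ^n of the incidence vectors of the independent sets of G) if and only if there exists a fractional coloring of G of total weight at most d/r. (Equivalently: the constant vector r/d lies in STAB(G) iff χ_f(G) ≤ d/r.) -/
open Matrix
open scoped ComplexOrder

/-- A finset of vertices is independent: no two of its vertices are adjacent. -/
def IsIndep {n : ℕ} (G : SimpleGraph (Fin n)) (s : Finset (Fin n)) : Prop :=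
  ∀ v ∈ s, ∀ u ∈ s, ¬ G.Adj v u

/-- Incidence vector of a finset of vertices. -/
def incVec {n : ℕ} (s : Finset (Fin n)) : Fin n → ℝ := fun v => if v ∈ s then 1 else 0

/-- STAB(G): the convex hull of the incidence vectors of the independent sets of `G`. -/
def STAB {n : ℕ} (G : SimpleGraph (Fin n)) : Set (Fin n → ℝ) :=
  convexHull ℝ {x | ∃ s : Finset (Fin n), IsIndep G s ∧ x = incVec s}

/-- A fractional coloring of `G`: nonnegative weights supported on independent sets,
covering every vertex with total weight at least 1. -/
def IsFracColoring {n : ℕ} (G : SimpleGraph (Fin n)) (w : Finset (Fin n) → ℝ) : Prop :=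
  (∀ s, 0 ≤ w s) ∧ (∀ s, w s ≠ 0 → IsIndep G s) ∧
    (∀ v : Fin n, 1 ≤ ∑ s : Finset (Fin n), if v ∈ s then w s else 0)

/-- Total weight of a weight assignment on independent sets. -/
def totalWeight {n : ℕ} (w : Finset (Fin n) → ℝ) : ℝ := ∑ s : Finset (Fin n), w s

/-- `P` is an orthogonal projection of rank `r`: Hermitian, idempotent, of rank `r`. -/
def IsProjOfRank {d : ℕ} (r : ℕ) (P : Matrix (Fin d) (Fin d) ℂ) : Prop :=
  P.IsHermitian ∧ P * P = P ∧ P.rank = r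

/-- A family of projectors realizes the orthogonality graph `G`:
adjacent vertices carry orthogonal projectors. -/
def Realizes {n d : ℕ} (G : SimpleGraph (Fin n)) (P : Fin n → Matrix (Fin d) (Fin d) ℂ) : Prop :=
  ∀ j k, G.Adj j k → P j * P k = 0

/-- Coverage of a vertex by a weight function. -/
def coverW {n : ℕ} (w : Finset (Fin n) → ℝ) (v : Fin n) : ℝ :=
  ∑ s : Finset (Fin n), if v ∈ s then w s else 0

lemma indep_subset {n : ℕ} {G : SimpleGraph (Fin n)} {s t : Finset (Fin n)}
    (hst : s ⊆ t) (h : IsIndep G t) : IsIndep G s :=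
  fun v hv u hu => h v (hst hv) u (hst hu)

lemma flip_involutive {n : ℕ} (v : Fin n) :
    Function.Involutive (fun s : Finset (Fin n) => if v ∈ s then s.erase v else insert v s) := by
  intro s
  by_cases h : v ∈ s
  · simp [h, Finset.mem_erase, Finset.insert_erase h]
  · simp [h, Finset.erase_insert h]

lemma sum_flip {n : ℕ} (v : Fin n) (g : Finset (Fin n) → ℝ) :
    ∑ s : Finset (Fin n), g (if v ∈ s then s.erase v else insert v s) =
      ∑ s : Finset (Fin n), g s :=
  Function.Bijective.sum_comp (flip_involutive v).bijective g

/-- Fix the coverage of one vertex to exactly `t`, preserving everything else. -/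
lemma fix_vertex {n : ℕ} {G : SimpleGraph (Fin n)} {t : ℝ} (ht : 0 < t)
    (u : Finset (Fin n) → ℝ) (h0 : ∀ s, 0 ≤ u s) (h1 : ∀ s, u s ≠ 0 → IsIndep G s)
    (v : Fin n) (hcov : t ≤ coverW u v) :
    ∃ u' : Finset (Fin n) → ℝ, (∀ s, 0 ≤ u' s) ∧ (∀ s, u' s ≠ 0 → IsIndep G s) ∧
      (∑ s : Finset (Fin n), u' s = ∑ s : Finset (Fin n), u s) ∧
      coverW u' v = t ∧ ∀ w, w ≠ v → coverW u' w = coverW u w := by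
  classical
  have hCpos : 0 < coverW u v := lt_of_lt_of_le ht hcov
  set β : ℝ := t / coverW u v with hβdef
  have hβ0 : 0 ≤ β := div_nonneg ht.le hCpos.le
  have hβ1 : β ≤ 1 := (div_le_one hCpos).mpr hcov
  set fl : Finset (Fin n) → Finset (Fin n) :=
    fun s => if v ∈ s then s.erase v else insert v s with hfl
  set D : Finset (Fin n) → ℝ := fun s => if v ∈ s then (1 - β) * u s else 0 with hD
  set u' : Finset (Fin n) → ℝ :=
    fun s => if v ∈ s then β * u s else u s + (1 - β) * u (insert v s) with hu'
  have key : ∀ s, u' s = u s - D s + D (fl s) := by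
    intro s
    by_cases h : v ∈ s
    · simp only [hu', hD, hfl, if_pos h]
      rw [if_neg (Finset.notMem_erase v s)]
      ring
    · simp only [hu', hD, hfl, if_neg h, if_pos (Finset.mem_insert_self v s)]
      ring
  have hsumflip : ∀ g : Finset (Fin n) → ℝ,
      ∑ s : Finset (Fin n), g (fl s) = ∑ s : Finset (Fin n), g s := fun g => sum_flip v g
  refine ⟨u', ?_, ?_, ?_, ?_, ?_⟩
  · intro s
    by_cases h : v ∈ s
    · simp only [hu', if_pos h]; exact mul_nonneg hβ0 (h0 s)
    · simp only [hu', if_neg h]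
      exact add_nonneg (h0 s) (mul_nonneg (by linarith) (h0 _))
  · intro s hs
    by_cases h : v ∈ s
    · simp only [hu', if_pos h] at hs
      exact h1 s (right_ne_zero_of_mul hs)
    · simp only [hu', if_neg h] at hs
      by_cases h2 : u s = 0
      · have : u (insert v s) ≠ 0 := by
          intro h3; apply hs; rw [h2, h3]; ring
        exact indep_subset (Finset.subset_insert v s) (h1 _ this)
      · exact h1 s h2
  · simp only [key]
    rw [Finset.sum_add_distrib, Finset.sum_sub_distrib, hsumflip D]
    ring
  · have : ∀ s : Finset (Fin n), (if v ∈ s then u' s else 0) = β * (if v ∈ s then u s else 0) := by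
      intro s
      by_cases h : v ∈ s <;> simp [hu', h]
    rw [coverW]
    simp only [this]
    rw [← Finset.mul_sum]
    show β * coverW u v = t
    rw [hβdef]
    field_simp
  · intro w hw
    have hmem : ∀ s : Finset (Fin n), w ∈ fl s ↔ w ∈ s := by
      intro s
      by_cases h : v ∈ s <;> simp [hfl, h, Finset.mem_erase, Finset.mem_insert, hw, Ne.symm hw]
    have key2 : ∀ s : Finset (Fin n), (if w ∈ s then u' s else 0) =
        (if w ∈ s then u s else 0) - (if w ∈ s then D s else 0)
          + (if w ∈ fl s then D (fl s) else 0) := by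
      intro s
      by_cases h : w ∈ s
      · rw [if_pos h, if_pos h, if_pos h, if_pos ((hmem s).mpr h), key s]
      · rw [if_neg h, if_neg h, if_neg h, if_neg (fun hh => h ((hmem s).mp hh))]
        ring
    rw [coverW, coverW]
    simp only [key2]
    rw [Finset.sum_add_distrib, Finset.sum_sub_distrib,
      hsumflip (fun s => if w ∈ s then D s else 0)]
    ring

/-- Make coverage exactly `t` at every vertex. -/
lemma exact_cover {n : ℕ} {G : SimpleGraph (Fin n)} {t : ℝ} (ht : 0 < t)
    (u : Finset (Fin n) → ℝ) (h0 : ∀ s, 0 ≤ u s) (h1 : ∀ s, u s ≠ 0 → IsIndep G s)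
    (h2 : ∀ v, t ≤ coverW u v) :
    ∃ c : Finset (Fin n) → ℝ, (∀ s, 0 ≤ c s) ∧ (∀ s, c s ≠ 0 → IsIndep G s) ∧
      (∑ s : Finset (Fin n), c s = ∑ s : Finset (Fin n), u s) ∧ (∀ v, coverW c v = t) := by
  classical
  suffices h : ∀ U : Finset (Fin n), ∃ c : Finset (Fin n) → ℝ,
      (∀ s, 0 ≤ c s) ∧ (∀ s, c s ≠ 0 → IsIndep G s) ∧
      (∑ s : Finset (Fin n), c s = ∑ s : Finset (Fin n), u s) ∧
      (∀ v ∈ U, coverW c v = t) ∧ (∀ v, t ≤ coverW c v) by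
    obtain ⟨c, a1, a2, a3, a4, _⟩ := h Finset.univ
    exact ⟨c, a1, a2, a3, fun v => a4 v (Finset.mem_univ v)⟩
  intro U
  induction U using Finset.induction_on with
  | empty => exact ⟨u, h0, h1, rfl, by simp, h2⟩
  | @insert a U ha ih =>
      obtain ⟨c, hc0, hc1, hc2, hc3, hc4⟩ := ih
      obtain ⟨c', d0, d1, d2, d3, d4⟩ := fix_vertex (G := G) ht c hc0 hc1 a (hc4 a)
      refine ⟨c', d0, d1, d2.trans hc2, ?_, ?_⟩
      · intro w hw
        rcases Finset.mem_insert.mp hw with rfl | hw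
        · exact d3
        · by_cases hwa : w = a
          · subst hwa; exact d3
          · rw [d4 w hwa]; exact hc3 w hw
      · intro w
        by_cases hwa : w = a
        · subst hwa; rw [d3]
        · rw [d4 w hwa]; exact hc4 w

/-- Characterization of membership in STAB: exact convex weights. -/
lemma mem_STAB_iff {n : ℕ} (G : SimpleGraph (Fin n)) (x : Fin n → ℝ) :
    x ∈ STAB G ↔ ∃ c : Finset (Fin n) → ℝ, (∀ s, 0 ≤ c s) ∧ (∀ s, c s ≠ 0 → IsIndep G s) ∧
      (∑ s : Finset (Fin n), c s = 1) ∧ ∀ v, coverW c v = x v := by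
  classical
  constructor
  · intro hx
    rw [STAB, convexHull_eq] at hx
    obtain ⟨ι, tt, w, z, hw0, hw1, hz, hx⟩ := hx
    set f : ι → Finset (Fin n) := fun i =>
      if h : ∃ s, IsIndep G s ∧ z i = incVec s then h.choose else ∅ with hf
    have hfspec : ∀ i ∈ tt, IsIndep G (f i) ∧ z i = incVec (f i) := by
      intro i hi
      have h : ∃ s, IsIndep G s ∧ z i = incVec s := hz i hi
      simp only [hf, dif_pos h]
      exact ⟨h.choose_spec.1, h.choose_spec.2⟩
    set c : Finset (Fin n) → ℝ := fun s => ∑ i ∈ tt.filter (fun i => f i = s), w i with hc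
    have hxval : ∀ v, x v = ∑ i ∈ tt, if v ∈ f i then w i else 0 := by
      intro v
      rw [← hx, Finset.centerMass_eq_of_sum_1 tt z hw1]
      rw [Finset.sum_apply]
      apply Finset.sum_congr rfl
      intro i hi
      rw [Pi.smul_apply, smul_eq_mul, (hfspec i hi).2, incVec]
      by_cases h : v ∈ f i <;> simp [h]
    refine ⟨c, ?_, ?_, ?_, ?_⟩
    · intro s
      exact Finset.sum_nonneg fun i hi => hw0 i (Finset.mem_filter.mp hi).1
    · intro s hs
      have hne : (tt.filter (fun i => f i = s)).Nonempty := by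
        by_contra hne
        rw [Finset.not_nonempty_iff_eq_empty] at hne
        apply hs
        simp only [hc, hne, Finset.sum_empty]
      obtain ⟨i, hi⟩ := hne
      obtain ⟨hi1, hi2⟩ := Finset.mem_filter.mp hi
      exact hi2 ▸ (hfspec i hi1).1
    · simp only [hc]
      rw [Finset.sum_fiberwise_of_maps_to (fun i _ => Finset.mem_univ (f i)) w]
      exact hw1
    · intro v
      have hterm : ∀ s : Finset (Fin n), (if v ∈ s then c s else 0) =
          ∑ i ∈ tt.filter (fun i => f i = s), (if v ∈ f i then w i else 0) := by
        intro s
        rw [Finset.sum_congr rfl (fun i hi => by rw [(Finset.mem_filter.mp hi).2])]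
        by_cases h : v ∈ s <;> simp [h, hc]
      rw [coverW]
      simp only [hterm]
      rw [Finset.sum_fiberwise_of_maps_to (fun i _ => Finset.mem_univ (f i))]
      exact (hxval v).symm
  · rintro ⟨c, hc0, hc1, hc2, hc3⟩
    have hxeq : x = ∑ s : Finset (Fin n), c s • incVec s := by
      funext v
      rw [← hc3 v, coverW, Finset.sum_apply]
      apply Finset.sum_congr rfl
      intro s _
      rw [Pi.smul_apply, smul_eq_mul, incVec]
      by_cases h : v ∈ s <;> simp [h]
    have hmass : (Finset.univ.filter (fun s : Finset (Fin n) => c s ≠ 0)).centerMass c incVec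
        = ∑ s : Finset (Fin n), c s • incVec s := by
      rw [Finset.centerMass_eq_of_sum_1]
      · exact Finset.sum_filter_of_ne (fun s _ h => by
          intro h'; apply h; rw [h', zero_smul])
      · rw [Finset.sum_filter_ne_zero]; exact hc2
    rw [hxeq, ← hmass, STAB]
    apply Finset.centerMass_mem_convexHull
    · intro s _; exact hc0 s
    · rw [Finset.sum_filter_ne_zero, hc2]; exact one_pos
    · intro s hs
      exact ⟨s, hc1 s (Finset.mem_filter.mp hs).2, rfl⟩

theorem stmt0 {n : ℕ} (G : SimpleGraph (Fin n)) (r d : ℕ)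
    (hr : 0 < r) (hd : 0 < d) (hrd : r ≤ d) :
    (fun _ : Fin n => (r : ℝ) / d) ∈ STAB G ↔
      ∃ w : Finset (Fin n) → ℝ, IsFracColoring G w ∧ totalWeight w ≤ (d : ℝ) / r := by
  classical
  have hrpos : (0 : ℝ) < r := by exact_mod_cast hr
  have hdpos : (0 : ℝ) < d := by exact_mod_cast hd
  have htpos : (0 : ℝ) < (r : ℝ) / d := div_pos hrpos hdpos
  have hcov_scale : ∀ (a : ℝ) (w : Finset (Fin n) → ℝ) (v : Fin n),
      coverW (fun s => a * w s) v = a * coverW w v := by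
    intro a w v
    rw [coverW, coverW, Finset.mul_sum]
    apply Finset.sum_congr rfl
    intro s _
    by_cases h : v ∈ s <;> simp [h]
  constructor
  · intro hx
    obtain ⟨c, hc0, hc1, hc2, hc3⟩ := (mem_STAB_iff G _).mp hx
    refine ⟨fun s => ((d : ℝ) / r) * c s, ⟨fun s => mul_nonneg (by positivity) (hc0 s),
      fun s hs => hc1 s (right_ne_zero_of_mul hs), fun v => ?_⟩, ?_⟩
    · have : coverW (fun s => ((d : ℝ) / r) * c s) v = ((d : ℝ) / r) * ((r : ℝ) / d) := by
        rw [hcov_scale, hc3 v]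
      rw [coverW] at this
      rw [this]
      have h1 : (d : ℝ) / r * ((r : ℝ) / d) = 1 := by
        field_simp
      rw [h1]
    · rw [totalWeight, ← Finset.mul_sum, hc2, mul_one]
  · rintro ⟨w, ⟨hw0, hw1, hw2⟩, hwt⟩
    set u : Finset (Fin n) → ℝ := fun s => ((r : ℝ) / d) * w s with hu
    have hu0 : ∀ s, 0 ≤ u s := fun s => mul_nonneg htpos.le (hw0 s)
    have hu1 : ∀ s, u s ≠ 0 → IsIndep G s := fun s hs => hw1 s (right_ne_zero_of_mul hs)
    have hu2 : ∀ v, (r : ℝ) / d ≤ coverW u v := by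
      intro v
      rw [hu, hcov_scale]
      have h1 : 1 ≤ coverW w v := hw2 v
      exact le_mul_of_one_le_right htpos.le h1
    obtain ⟨c, hc0, hc1, hc2, hc3⟩ := exact_cover (G := G) htpos u hu0 hu1 hu2
    have hsum_le : ∑ s : Finset (Fin n), c s ≤ 1 := by
      rw [hc2, hu, ← Finset.mul_sum]
      have : ∑ s : Finset (Fin n), w s ≤ (d : ℝ) / r := hwt
      calc ((r : ℝ) / d) * ∑ s : Finset (Fin n), w s ≤ ((r : ℝ) / d) * ((d : ℝ) / r) :=
            mul_le_mul_of_nonneg_left this htpos.le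
        _ = 1 := by field_simp
    set pad : ℝ := 1 - ∑ s : Finset (Fin n), c s with hpad
    have hpad0 : 0 ≤ pad := by rw [hpad]; linarith
    refine (mem_STAB_iff G _).mpr ⟨fun s => c s + (if s = ∅ then pad else 0), ?_, ?_, ?_, ?_⟩
    · intro s
      by_cases h : s = ∅
      · simpa [h] using add_nonneg (hc0 s) hpad0
      · simpa [h] using hc0 s
    · intro s hs
      by_cases h : s = ∅
      · subst h; intro v hv; simp at hv
      · simp only [if_neg h, add_zero] at hs
        exact hc1 s hs
    · rw [Finset.sum_add_distrib, Finset.sum_ite_eq' Finset.univ (∅ : Finset (Fin n))]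
      simp [hpad]
    · intro v
      have : coverW (fun s => c s + (if s = ∅ then pad else 0)) v = coverW c v := by
        rw [coverW, coverW]
        apply Finset.sum_congr rfl
        intro s _
        by_cases h : v ∈ s
        · have hne : s ≠ ∅ := Finset.ne_empty_of_mem h
          simp [h, hne]
        · simp [h]
      rw [this, hc3 v]
end

section
/- Let G be a finite simple graph on Fin n, let d ≥ 1, r ≥ 1, and let Π : Fin n → Matrix (Fin d) (Fin d) ℂ be a family of orthogonal projections, each of rank r, such that Π j * Π k = 0 whenever j and k are adjacent in G. If every fractional coloring of G has total weight strictly greater than d/r (i.e. χ_f(G) > d/r), then the vector x ∈ ℝ^n with components x_k = Re(tr(Π_k * ρ_mix)), where ρ_mix = (1/d)·I is the maximally mixed state, does not lie in STAB(G). -/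
open Matrix
open scoped ComplexOrder

/-!
Every coordinate of the vector is `tr(Π_k)/d = rank(Π_k)/d = r/d`, since the trace of an
idempotent matrix is its rank; so the vector is the constant `r/d`. Writing a point of `STAB(G)`
as a convex combination of incidence vectors of independent sets and scaling the weights by `c⁻¹`
turns a point all of whose coordinates are at least `c > 0` into a fractional coloring of total
weight `c⁻¹`. With `c = r/d` this is a fractional coloring of weight `d/r`, contradicting
`χ_f(G) > d/r`.
-/

theorem Matrix.trace_eq_rank_of_isIdempotentElem {m K : Type*} [Fintype m] [DecidableEq m]
    [Field K] {M : Matrix m m K} (hM : IsIdempotentElem M) : M.trace = M.rank := by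
  have hlin : IsIdempotentElem (Matrix.toLin' M) := hM.map Matrix.toLinAlgEquiv'
  rw [← Matrix.trace_toLin'_eq, ((LinearMap.isProj_range_iff_isIdempotentElem _).mpr hlin).trace,
    rank, Matrix.toLin'_apply']

theorem Matrix.re_trace_mul_maximallyMixed {d r : ℕ} {P : Matrix (Fin d) (Fin d) ℂ}
    (hP : IsIdempotentElem P) (hr : P.rank = r) :
    ((P * ((1 / (d : ℂ)) • (1 : Matrix (Fin d) (Fin d) ℂ))).trace).re = r / d := by
  rw [mul_smul_comm, mul_one, trace_smul, trace_eq_rank_of_isIdempotentElem hP, hr, smul_eq_mul,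
    one_div, ← Complex.ofReal_natCast, ← Complex.ofReal_natCast, ← Complex.ofReal_inv,
    ← Complex.ofReal_mul, Complex.ofReal_re, inv_mul_eq_div]

theorem exists_weights_of_mem_convexHull_image {α E : Type*} [Fintype α] [DecidableEq α]
    [AddCommGroup E] [Module ℝ E] {f : α → E} {S : Set α} {x : E}
    (hx : x ∈ convexHull ℝ (f '' S)) :
    ∃ μ : α → ℝ, (∀ a, 0 ≤ μ a) ∧ (∀ a, μ a ≠ 0 → a ∈ S) ∧ ∑ a, μ a = 1 ∧
      ∑ a, μ a • f a = x := by
  obtain ⟨ι, _, w, z, hw₀, hw₁, hz, rfl⟩ := mem_convexHull_iff_exists_fintype.mp hx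
  choose g hgS hgz using hz
  refine ⟨fun a => ∑ i with g i = a, w i, fun a => Finset.sum_nonneg fun i _ => hw₀ i,
    fun a ha => ?_, by rw [Finset.sum_fiberwise, hw₁], ?_⟩
  · obtain ⟨i, hi, -⟩ := Finset.exists_ne_zero_of_sum_ne_zero ha
    exact (Finset.mem_filter.mp hi).2 ▸ hgS i
  · simp_rw [Finset.sum_smul, ← hgz, ← Finset.sum_fiberwise Finset.univ g (fun i => w i • f (g i))]
    refine Finset.sum_congr rfl fun a _ => Finset.sum_congr rfl fun i hi => ?_
    rw [(Finset.mem_filter.mp hi).2]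

theorem STAB_eq_convexHull_image {n : ℕ} (G : SimpleGraph (Fin n)) :
    STAB G = convexHull ℝ (incVec '' {s | IsIndep G s}) := by
  simp only [STAB, Set.image, eq_comm]
  rfl

theorem exists_isFracColoring_of_mem_STAB {n : ℕ} {G : SimpleGraph (Fin n)} {x : Fin n → ℝ}
    (hx : x ∈ STAB G) {c : ℝ} (hc : 0 < c) (hxc : ∀ v, c ≤ x v) :
    ∃ w, IsFracColoring G w ∧ totalWeight w = c⁻¹ := by
  rw [STAB_eq_convexHull_image] at hx
  obtain ⟨μ, hμ₀, hμS, hμ₁, rfl⟩ := exists_weights_of_mem_convexHull_image hx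
  have hcover : ∀ v, ∑ s, (if v ∈ s then (c⁻¹ • μ) s else 0) = c⁻¹ * ∑ s, μ s * incVec s v := by
    intro v
    simp only [Finset.mul_sum, incVec, Pi.smul_apply, smul_eq_mul]
    refine Finset.sum_congr rfl fun s _ => ?_
    split_ifs <;> ring
  refine ⟨c⁻¹ • μ, ⟨fun s => smul_nonneg (inv_nonneg.mpr hc.le) (hμ₀ s),
    fun s hs => hμS s (right_ne_zero_of_mul hs), fun v => ?_⟩, ?_⟩
  · specialize hxc v
    simp only [Finset.sum_apply, Pi.smul_apply, smul_eq_mul] at hxc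
    rw [hcover, ← inv_mul_cancel₀ hc.ne']
    gcongr
  · simp only [totalWeight, Pi.smul_apply, smul_eq_mul]
    rw [← Finset.mul_sum, hμ₁, mul_one]

theorem stmt1_general {n d : ℕ} (G : SimpleGraph (Fin n)) (r : ℕ) (hd : 1 ≤ d) (hr : 1 ≤ r)
    (P : Fin n → Matrix (Fin d) (Fin d) ℂ)
    (hP : ∀ k, IsProjOfRank r (P k))
    (hchi : ∀ w : Finset (Fin n) → ℝ, IsFracColoring G w → (d : ℝ) / r < totalWeight w) :
    (fun k : Fin n =>
        ((P k * ((1 / (d : ℂ)) • (1 : Matrix (Fin d) (Fin d) ℂ))).trace).re) ∉ STAB G := by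
  have hconst : (fun k : Fin n =>
      ((P k * ((1 / (d : ℂ)) • (1 : Matrix (Fin d) (Fin d) ℂ))).trace).re) = fun _ => (r : ℝ) / d :=
    funext fun k => re_trace_mul_maximallyMixed (hP k).2.1 (hP k).2.2
  rw [hconst]
  intro hmem
  have hpos : (0 : ℝ) < r / d := div_pos (by exact_mod_cast hr) (by exact_mod_cast hd)
  obtain ⟨w, hw, hweight⟩ := exists_isFracColoring_of_mem_STAB hmem hpos fun _ => le_rfl
  have hlt := hchi w hw
  rw [hweight, inv_div] at hlt
  exact lt_irrefl _ hlt

theorem stmt1 {n d : ℕ} (G : SimpleGraph (Fin n)) (r : ℕ) (hd : 1 ≤ d) (hr : 1 ≤ r)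
    (P : Fin n → Matrix (Fin d) (Fin d) ℂ)
    (hP : ∀ k, IsProjOfRank r (P k)) (hreal : Realizes G P)
    (hchi : ∀ w : Finset (Fin n) → ℝ, IsFracColoring G w → (d : ℝ) / r < totalWeight w) :
    (fun k : Fin n =>
        ((P k * ((1 / (d : ℂ)) • (1 : Matrix (Fin d) (Fin d) ℂ))).trace).re) ∉ STAB G :=
  stmt1_general G r hd hr P hP hchi
end

section
/- Let G be a finite simple graph on Fin n, let d ≥ 1, r ≥ 1, and let Π : Fin n → Matrix (Fin d) (Fin d) ℂ be a family of rank-r orthogonal projections realizing G (Π j * Π k = 0 whenever j and k are adjacent). Suppose every fractional coloring of G has total weight strictly greater than d/r. Then for EVERY density matrix ρ on ℂ^d there exists a unitary matrix U such that the vector x ∈ ℝ^n with components x_k = Re(tr(U * Π_k * U† * ρ)) does not lie in STAB(G). (State-independent contextuality of G in dimension d.) -/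
open Matrix
open scoped ComplexOrder

/-!
Conjugating by the signed shifts `D_ε X_a` (`D_ε` a diagonal sign matrix, `X_a` a cyclic shift)
is a unitary 1-design: the sum of the `U† ρ U` over all of them is `2^d tr ρ • 1`. Hence the
average of the vectors `k ↦ tr (U Πₖ U† ρ)` over these `U` is the constant vector `r / d`. If all
of them lay in the convex set STAB(G), so would `r / d • 𝟙`; writing it as a convex combination
of independent sets and scaling the weights by `d / r` gives a fractional coloring of weight
`d / r`.
-/

theorem Matrix.trace_eq_rank_of_isIdempotentElem_s2 {ι K : Type*} [Fintype ι] [DecidableEq ι]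
    [Field K] {P : Matrix ι ι K} (h : IsIdempotentElem P) : P.trace = P.rank := by
  have h' : IsIdempotentElem (toLin' P) := h.map toLinAlgEquiv'
  rw [← trace_toLin'_eq, (LinearMap.IsIdempotentElem.isProj_range _ h').trace]
  rfl

theorem Int.sum_units_apply_mul_apply {ι : Type*} [Fintype ι] [DecidableEq ι] (j k : ι) :
    ∑ ε : ι → ℤˣ, ((ε j : ℤ) * ε k) = if j = k then 2 ^ Fintype.card ι else 0 := by
  split_ifs with hjk
  · subst hjk
    simp
  · -- flipping the sign of `ε j` negates every term
    have hflip : ∑ ε : ι → ℤˣ, ((ε j : ℤ) * ε k) = -∑ ε : ι → ℤˣ, ((ε j : ℤ) * ε k) := by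
      rw [← Finset.sum_neg_distrib]
      refine Fintype.sum_equiv (Equiv.mulLeft (Pi.mulSingle j (-1))) _ _ fun ε => ?_
      simp [Ne.symm hjk]
    omega

section SignedShift

variable {ι : Type*} [DecidableEq ι]

def signDiag (ε : ι → ℤˣ) : Matrix ι ι ℂ := diagonal fun i => ((ε i : ℤ) : ℂ)

theorem conjTranspose_signDiag (ε : ι → ℤˣ) : (signDiag ε)ᴴ = signDiag ε := by
  simp [signDiag, diagonal_conjTranspose]

variable [Fintype ι]

theorem signDiag_mul_self (ε : ι → ℤˣ) : signDiag ε * signDiag ε = 1 := by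
  rw [signDiag, diagonal_mul_diagonal, ← diagonal_one]
  congr 1; ext i
  rw [← Int.cast_mul, ← Units.val_mul, Int.units_mul_self, Units.val_one, Int.cast_one]

theorem signDiag_mem_unitaryGroup (ε : ι → ℤˣ) : signDiag ε ∈ unitaryGroup ι ℂ := by
  rw [mem_unitaryGroup_iff', star_eq_conjTranspose, conjTranspose_signDiag, signDiag_mul_self]

theorem sum_signDiag_mul_mul (A : Matrix ι ι ℂ) :
    ∑ ε : ι → ℤˣ, signDiag ε * A * signDiag ε = (2 ^ Fintype.card ι : ℂ) • diagonal A.diag := by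
  ext j k
  have h := congrArg (fun z : ℤ => (z : ℂ) * A j k) (Int.sum_units_apply_mul_apply j k)
  simp only [Int.cast_sum, Int.cast_mul, Finset.sum_mul] at h
  simp only [Matrix.sum_apply, signDiag, diagonal_mul, mul_diagonal, Matrix.smul_apply]
  rw [show ∑ ε : ι → ℤˣ, ((ε j : ℤ) : ℂ) * A j k * ((ε k : ℤ) : ℂ)
    = ∑ ε : ι → ℤˣ, ((ε j : ℤ) : ℂ) * ((ε k : ℤ) : ℂ) * A j k from
      Finset.sum_congr rfl fun _ _ => by ring, h]
  split_ifs with hjk <;> simp [hjk]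

theorem Equiv.Perm.permMatrix_mem_unitaryGroup (σ : Equiv.Perm ι) :
    σ.permMatrix ℂ ∈ unitaryGroup ι ℂ := by
  rw [mem_unitaryGroup_iff', star_eq_conjTranspose, conjTranspose_permMatrix, ← permMatrix_mul,
    mul_inv_cancel, permMatrix_one]

theorem Equiv.Perm.conjTranspose_permMatrix_mul_mul (σ : Equiv.Perm ι) (M : Matrix ι ι ℂ) :
    (σ.permMatrix ℂ)ᴴ * M * σ.permMatrix ℂ = M.submatrix σ.symm σ.symm := by
  rw [conjTranspose_permMatrix, PEquiv.toMatrix_toPEquiv_mul, PEquiv.mul_toMatrix_toPEquiv,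
    submatrix_submatrix]
  rfl

variable [AddGroup ι]

theorem sum_shift_conj_diagonal (v : ι → ℂ) :
    ∑ a : ι, ((Equiv.addRight a).permMatrix ℂ)ᴴ * diagonal v * (Equiv.addRight a).permMatrix ℂ
      = (∑ i, v i) • 1 := by
  calc _ = ∑ a : ι, diagonal fun i => v (i - a) := by
        simp only [Equiv.Perm.conjTranspose_permMatrix_mul_mul, submatrix_diagonal_equiv]
        simp only [Function.comp_def, Equiv.addRight_symm, Equiv.coe_addRight, sub_eq_add_neg]
    _ = diagonal fun i => ∑ a, v (i - a) := by
        simp only [← diagonalAddMonoidHom_apply, ← map_sum, Finset.sum_fn]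
    _ = _ := by
        rw [smul_one_eq_diagonal]
        exact congrArg diagonal <| funext fun i =>
          Fintype.sum_equiv (Equiv.subLeft i) _ _ fun _ => rfl

def signedShift (p : (ι → ℤˣ) × ι) : Matrix ι ι ℂ :=
  signDiag p.1 * (Equiv.addRight p.2).permMatrix ℂ

theorem signedShift_mem_unitaryGroup (p : (ι → ℤˣ) × ι) : signedShift p ∈ unitaryGroup ι ℂ :=
  mul_mem (signDiag_mem_unitaryGroup p.1) (Equiv.Perm.permMatrix_mem_unitaryGroup _)

theorem sum_conjTranspose_signedShift_mul_mul (A : Matrix ι ι ℂ) :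
    ∑ p, (signedShift p)ᴴ * A * signedShift p = (2 ^ Fintype.card ι * A.trace) • 1 := by
  let X (a : ι) : Matrix ι ι ℂ := (Equiv.addRight a).permMatrix ℂ
  calc _ = ∑ a, (X a)ᴴ * (∑ ε : ι → ℤˣ, signDiag ε * A * signDiag ε) * X a := by
        rw [Fintype.sum_prod_type, Finset.sum_comm]
        simp only [signedShift, conjTranspose_mul, conjTranspose_signDiag, Matrix.sum_mul,
          Matrix.mul_sum, Matrix.mul_assoc, X]
    _ = (2 ^ Fintype.card ι : ℂ) • ∑ a, (X a)ᴴ * diagonal A.diag * X a := by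
        simp only [sum_signDiag_mul_mul, Matrix.mul_smul, Matrix.smul_mul, Finset.smul_sum]
    _ = _ := by
        rw [sum_shift_conj_diagonal, smul_smul]
        rfl

theorem const_mem_of_forall_unitaryGroup_mem {κ : Type*} {S : Set (κ → ℝ)} (hS : Convex ℝ S)
    {P : κ → Matrix ι ι ℂ} {r : ℝ} (hP : ∀ k, (P k).trace = r) {ρ : Matrix ι ι ℂ}
    (hρ : ρ.trace = 1) (h : ∀ U ∈ unitaryGroup ι ℂ, (fun k => ((U * P k * Uᴴ * ρ).trace).re) ∈ S) :
    (fun _ => r / Fintype.card ι) ∈ S := by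
  have hcycle (U : Matrix ι ι ℂ) (k : κ) :
      (U * P k * Uᴴ * ρ).trace = (P k * (Uᴴ * ρ * U)).trace := by
    rw [Matrix.mul_assoc, Matrix.mul_assoc, trace_mul_comm]
    simp only [Matrix.mul_assoc]
  have hsum (k : κ) :
      ∑ p, ((signedShift p * P k * (signedShift p)ᴴ * ρ).trace).re = 2 ^ Fintype.card ι * r := by
    simp only [← Complex.re_sum, hcycle, ← trace_sum, ← Matrix.mul_sum,
      sum_conjTranspose_signedShift_mul_mul, hρ, Matrix.mul_smul, trace_smul, hP k, mul_one,
      smul_eq_mul]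
    exact_mod_cast Complex.ofReal_re (2 ^ Fintype.card ι * r)
  have hcard : (Fintype.card ((ι → ℤˣ) × ι) : ℝ) = 2 ^ Fintype.card ι * Fintype.card ι := by
    simp [Fintype.card_prod]
  have havg : (fun _ => r / Fintype.card ι) = ∑ p, (Fintype.card ((ι → ℤˣ) × ι) : ℝ)⁻¹ •
      fun k => ((signedShift p * P k * (signedShift p)ᴴ * ρ).trace).re := by
    ext k
    simp only [Finset.sum_apply, Pi.smul_apply, smul_eq_mul, ← Finset.mul_sum, hsum, hcard]
    field_simp
  rw [havg]
  refine hS.sum_mem (fun _ _ => by positivity) ?_ fun p _ => h _ (signedShift_mem_unitaryGroup p)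
  rw [Finset.sum_const, Finset.card_univ, nsmul_eq_mul, mul_inv_cancel₀ (by positivity)]

end SignedShift

theorem STAB_subset_weightedSums {n : ℕ} (G : SimpleGraph (Fin n)) :
    STAB G ⊆ {x | ∃ w : Finset (Fin n) → ℝ, (∀ s, 0 ≤ w s) ∧ (∀ s, w s ≠ 0 → IsIndep G s) ∧
      ∑ s, w s = 1 ∧ x = ∑ s, w s • incVec s} := by
  classical
  refine convexHull_min ?_ ?_
  · rintro _ ⟨s, hs, rfl⟩
    refine ⟨Pi.single s 1, fun t => ?_, fun t ht => ?_, by simp, by simp⟩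
    · by_cases h : t = s <;> simp [h]
    · by_cases h : t = s
      · exact h ▸ hs
      · simp [h] at ht
  · rintro _ ⟨w₁, hnn₁, hind₁, hsum₁, rfl⟩ _ ⟨w₂, hnn₂, hind₂, hsum₂, rfl⟩ a b ha hb hab
    refine ⟨a • w₁ + b • w₂, fun s => ?_, fun s hs => ?_, ?_, ?_⟩
    · simp only [Pi.add_apply, Pi.smul_apply, smul_eq_mul]
      exact add_nonneg (mul_nonneg ha (hnn₁ s)) (mul_nonneg hb (hnn₂ s))
    · by_cases h : w₁ s = 0
      · exact hind₂ s fun h' => hs (by simp [h, h'])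
      · exact hind₁ s h
    · simp [Finset.sum_add_distrib, ← Finset.mul_sum, hsum₁, hsum₂, hab]
    · simp [Finset.smul_sum, add_smul, mul_smul, Finset.sum_add_distrib]

theorem exists_isFracColoring_of_const_mem_STAB {n : ℕ} {G : SimpleGraph (Fin n)} {c : ℝ}
    (hc : 0 < c) (h : (fun _ => c) ∈ STAB G) :
    ∃ w, IsFracColoring G w ∧ totalWeight w = c⁻¹ := by
  obtain ⟨w, h0, hind, h1, hx⟩ := STAB_subset_weightedSums G h
  refine ⟨c⁻¹ • w, ⟨fun s => ?_, fun s hs => hind s fun h => hs (by simp [h]), fun v => ?_⟩, ?_⟩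
  · exact smul_nonneg (inv_nonneg.mpr hc.le) (h0 s)
  · have hv := congrFun hx v
    simp only [Finset.sum_apply, Pi.smul_apply, incVec, smul_eq_mul, mul_ite, mul_one,
      mul_zero] at hv
    simp only [Pi.smul_apply, smul_eq_mul, ← mul_ite_zero, ← Finset.mul_sum, ← hv]
    rw [inv_mul_cancel₀ hc.ne']
  · simp [totalWeight, ← Finset.mul_sum, h1]

theorem stmt2_general {n d : ℕ} (G : SimpleGraph (Fin n)) (r : ℕ) (hd : 1 ≤ d) (hr : 1 ≤ r)
    (P : Fin n → Matrix (Fin d) (Fin d) ℂ)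
    (hP : ∀ k, IsProjOfRank r (P k))
    (hchi : ∀ w : Finset (Fin n) → ℝ, IsFracColoring G w → (d : ℝ) / r < totalWeight w) :
    ∀ ρ : Matrix (Fin d) (Fin d) ℂ, ρ.PosSemidef → ρ.trace = 1 →
      ∃ U : Matrix (Fin d) (Fin d) ℂ, U ∈ Matrix.unitaryGroup (Fin d) ℂ ∧
        (fun k : Fin n => ((U * P k * Uᴴ * ρ).trace).re) ∉ STAB G := by
  intro ρ _ hρ
  by_contra! hstab
  have : NeZero d := ⟨by omega⟩
  have htrace (k : Fin n) : (P k).trace = ((r : ℝ) : ℂ) := by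
    rw [trace_eq_rank_of_isIdempotentElem_s2 (hP k).2.1, (hP k).2.2, Complex.ofReal_natCast]
  have hconst : (fun _ => (r : ℝ) / d) ∈ STAB G := by
    have := const_mem_of_forall_unitaryGroup_mem (convex_convexHull ℝ _) htrace hρ hstab
    rwa [Fintype.card_fin] at this
  obtain ⟨w, hw, hweight⟩ := exists_isFracColoring_of_const_mem_STAB (by positivity) hconst
  have := hchi w hw
  rw [hweight, inv_div] at this
  exact lt_irrefl _ this

theorem stmt2 {n d : ℕ} (G : SimpleGraph (Fin n)) (r : ℕ) (hd : 1 ≤ d) (hr : 1 ≤ r)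
    (P : Fin n → Matrix (Fin d) (Fin d) ℂ)
    (hP : ∀ k, IsProjOfRank r (P k)) (hreal : Realizes G P)
    (hchi : ∀ w : Finset (Fin n) → ℝ, IsFracColoring G w → (d : ℝ) / r < totalWeight w) :
    ∀ ρ : Matrix (Fin d) (Fin d) ℂ, ρ.PosSemidef → ρ.trace = 1 →
      ∃ U : Matrix (Fin d) (Fin d) ℂ, U ∈ Matrix.unitaryGroup (Fin d) ℂ ∧
        (fun k : Fin n => ((U * P k * Uᴴ * ρ).trace).re) ∉ STAB G :=
  stmt2_general G r hd hr P hP hchi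
end

section
/- Let G be a finite simple graph on Fin n and let w be an assignment of nonnegative real weights to the independent sets of G such that for every vertex v of G, the total weight of the independent sets containing v is at least 1. Then there exists an assignment w' of nonnegative real weights to the independent sets of G such that for every vertex v the total weight (under w') of the independent sets containing v is exactly 1, and the total weight of w' is at most the total weight of w. -/
open Matrix
open scoped ComplexOrder

/-!
Fix a vertex `v` of coverage `c ≥ 1`. Keep the fraction `1 / c` of the weight of every set
containing `v` and move the rest to the same set with `v` removed. Removing a vertex keeps a
set independent, the total weight and the coverage of every other vertex do not change, and
`v` now has coverage exactly `1`. Doing this once for each vertex gives an exact cover of the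
same total weight.
-/

open Finset

section FracCover

variable {α : Type*} [DecidableEq α] {𝒜 : Set (Finset α)} {w : Finset α → ℝ} {v : α} {t : ℝ}

def shrinkAt (w : Finset α → ℝ) (v : α) (t : ℝ) : Finset α → ℝ :=
  fun s => if v ∈ s then t * w s else w s + (1 - t) * w (insert v s)

theorem shrinkAt_nonneg (hw : ∀ s, 0 ≤ w s) (ht0 : 0 ≤ t) (ht1 : t ≤ 1) (s : Finset α) :
    0 ≤ shrinkAt w v t s := by
  unfold shrinkAt
  split_ifs
  · exact mul_nonneg ht0 (hw s)
  · exact add_nonneg (hw s) (mul_nonneg (sub_nonneg.2 ht1) (hw _))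

theorem mem_of_shrinkAt_ne_zero (h𝒜 : IsLowerSet 𝒜) (hw : ∀ s, w s ≠ 0 → s ∈ 𝒜) (s : Finset α)
    (hs : shrinkAt w v t s ≠ 0) : s ∈ 𝒜 := by
  unfold shrinkAt at hs
  split_ifs at hs
  · exact hw s (right_ne_zero_of_mul hs)
  · by_cases hs0 : w s = 0
    · rw [hs0, zero_add] at hs
      exact h𝒜 (subset_insert v s) (hw _ (right_ne_zero_of_mul hs))
    · exact hw s hs0

variable [Fintype α]

def coverage (w : Finset α → ℝ) (v : α) : ℝ := ∑ s, if v ∈ s then w s else 0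

def IsFracCover (𝒜 : Set (Finset α)) (w : Finset α → ℝ) : Prop :=
  (∀ s, 0 ≤ w s) ∧ (∀ s, w s ≠ 0 → s ∈ 𝒜) ∧ ∀ v, 1 ≤ coverage w v

theorem sum_eq_sum_powerset_erase_add_insert {M : Type*} [AddCommMonoid M] (v : α)
    (g : Finset α → M) :
    ∑ s, g s = ∑ s ∈ (univ.erase v).powerset, (g s + g (insert v s)) := by
  rw [sum_add_distrib, ← sum_powerset_insert (notMem_erase v univ), insert_erase (mem_univ v),
    powerset_univ]

theorem sum_shrinkAt : ∑ s, shrinkAt w v t s = ∑ s, w s := by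
  rw [sum_eq_sum_powerset_erase_add_insert v, sum_eq_sum_powerset_erase_add_insert v w]
  refine sum_congr rfl fun s hs => ?_
  have hv : v ∉ s := fun h => notMem_erase v univ (mem_powerset.1 hs h)
  simp only [shrinkAt, hv, mem_insert_self, if_true, if_false]
  ring

theorem coverage_shrinkAt_self : coverage (shrinkAt w v t) v = t * coverage w v := by
  simp only [coverage, mul_sum]
  refine sum_congr rfl fun s _ => ?_
  by_cases hv : v ∈ s <;> simp [shrinkAt, hv]

theorem coverage_shrinkAt_of_ne {u : α} (hu : u ≠ v) :
    coverage (shrinkAt w v t) u = coverage w u := by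
  rw [coverage, coverage, sum_eq_sum_powerset_erase_add_insert v,
    sum_eq_sum_powerset_erase_add_insert v (fun s => if u ∈ s then w s else 0)]
  refine sum_congr rfl fun s hs => ?_
  have hv : v ∉ s := fun h => notMem_erase v univ (mem_powerset.1 hs h)
  have hu' : u ∈ insert v s ↔ u ∈ s := mem_insert.trans (or_iff_right hu)
  simp only [shrinkAt, hv, mem_insert_self, hu', if_true, if_false]
  split_ifs <;> ring

theorem IsFracCover.shrinkAt_inv_coverage (h𝒜 : IsLowerSet 𝒜) (hw : IsFracCover 𝒜 w) (v : α) :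
    IsFracCover 𝒜 (shrinkAt w v (coverage w v)⁻¹) ∧
      coverage (shrinkAt w v (coverage w v)⁻¹) v = 1 := by
  obtain ⟨hw0, hw𝒜, hcov⟩ := hw
  have hc : 0 < coverage w v := one_pos.trans_le (hcov v)
  have hexact : coverage (shrinkAt w v (coverage w v)⁻¹) v = 1 := by
    rw [coverage_shrinkAt_self, inv_mul_cancel₀ hc.ne']
  refine ⟨⟨shrinkAt_nonneg hw0 (inv_nonneg.2 hc.le) (inv_le_one_of_one_le₀ (hcov v)),
    mem_of_shrinkAt_ne_zero h𝒜 hw𝒜, fun u => ?_⟩, hexact⟩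
  rcases eq_or_ne u v with rfl | hu
  · exact hexact.ge
  · exact (coverage_shrinkAt_of_ne hu).symm ▸ hcov u

theorem IsFracCover.exists_exact_on (h𝒜 : IsLowerSet 𝒜) (hw : IsFracCover 𝒜 w) (V : Finset α) :
    ∃ w', IsFracCover 𝒜 w' ∧ (∀ v ∈ V, coverage w' v = 1) ∧ ∑ s, w' s = ∑ s, w s := by
  induction V using Finset.induction with
  | empty => exact ⟨w, hw, by simp, rfl⟩
  | @insert a V ha ih =>
    obtain ⟨w₁, hw₁, hexact₁, htotal₁⟩ := ih
    obtain ⟨hw₂, ha₂⟩ := hw₁.shrinkAt_inv_coverage h𝒜 a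
    refine ⟨_, hw₂, fun v hv => ?_, sum_shrinkAt.trans htotal₁⟩
    rcases mem_insert.1 hv with rfl | hvV
    · exact ha₂
    · rw [coverage_shrinkAt_of_ne (ne_of_mem_of_not_mem hvV ha), hexact₁ v hvV]

end FracCover

theorem stmt4 {n : ℕ} (G : SimpleGraph (Fin n)) (w : Finset (Fin n) → ℝ)
    (hnn : ∀ s, 0 ≤ w s) (hsupp : ∀ s, w s ≠ 0 → IsIndep G s)
    (hcov : ∀ v : Fin n, 1 ≤ ∑ s : Finset (Fin n), if v ∈ s then w s else 0) :
    ∃ w' : Finset (Fin n) → ℝ,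
      (∀ s, 0 ≤ w' s) ∧ (∀ s, w' s ≠ 0 → IsIndep G s) ∧
      (∀ v : Fin n, (∑ s : Finset (Fin n), if v ∈ s then w' s else 0) = 1) ∧
      totalWeight w' ≤ totalWeight w := by
  have hlower : IsLowerSet {s | IsIndep G s} :=
    fun _ _ hts hs v hv u hu => hs v (hts hv) u (hts hu)
  obtain ⟨w', ⟨hnn', hsupp', -⟩, hexact, htotal⟩ :=
    IsFracCover.exists_exact_on hlower ⟨hnn, hsupp, hcov⟩ univ
  exact ⟨w', hnn', hsupp', fun v => hexact v (mem_univ v), htotal.le⟩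
end

section
/- Let G be a finite simple graph on Fin n, let d ≥ 1, r ≥ 1, and let c : Fin n → ℝ be arbitrary real coefficients. Let ρ₁, ρ₂ be Hermitian d×d complex matrices such that ρ₁ = ∑_{j=1}^{m} p_j · (U_j * ρ₂ * U_j†) for some probability weights p_j ≥ 0 with ∑_j p_j = 1 and unitary matrices U_j. Then for every family Π : Fin n → Matrix (Fin d) (Fin d) ℂ of rank-r orthogonal projections realizing G, there exists a family Π' of rank-r orthogonal projections realizing G such that ∑_k c_k · Re(tr(Π'_k * ρ₂)) ≥ ∑_k c_k · Re(tr(Π_k * ρ₁)). (Violations of noncontextuality inequalities, optimized over realizations, are monotone under mixing of unitary conjugates, and hence follow the majorization order of spectra.) -/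
open Matrix
open scoped ComplexOrder

/-! Each conjugate `U ρ₂ Uᴴ` scores against `Π` exactly what `ρ₂` scores against the conjugated
family `Uᴴ Π U`, which is again a realization of `G` by rank-`r` projections. The score against `ρ₁`
is linear in the state, hence a convex combination of these scores, so it is bounded by the best
of them. -/

noncomputable def score {n d : ℕ} (c : Fin n → ℝ) (P : Fin n → Matrix (Fin d) (Fin d) ℂ)
    (ρ : Matrix (Fin d) (Fin d) ℂ) : ℝ :=
  ∑ k, c k * ((P k * ρ).trace).re

lemma conjTranspose_mul_mul_mul_conjTranspose_mul_mul {ι R : Type*} [Fintype ι] [DecidableEq ι]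
    [CommRing R] [StarRing R] {U : Matrix ι ι R} (hU : U ∈ unitaryGroup ι R)
    (A B : Matrix ι ι R) : Uᴴ * A * U * (Uᴴ * B * U) = Uᴴ * (A * B) * U := by
  have hUUH : U * Uᴴ = 1 := Unitary.mul_star_self_of_mem hU
  calc Uᴴ * A * U * (Uᴴ * B * U) = Uᴴ * A * (U * Uᴴ) * B * U := by simp only [Matrix.mul_assoc]
    _ = Uᴴ * (A * B) * U := by rw [hUUH, Matrix.mul_one]; simp only [Matrix.mul_assoc]

section UnitaryConj

variable {d : ℕ} {U : Matrix (Fin d) (Fin d) ℂ}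

lemma IsProjOfRank.unitary_conj {r : ℕ} {P : Matrix (Fin d) (Fin d) ℂ}
    (hU : U ∈ unitaryGroup (Fin d) ℂ) (hP : IsProjOfRank r P) : IsProjOfRank r (Uᴴ * P * U) := by
  obtain ⟨hHerm, hIdem, hRank⟩ := hP
  refine ⟨isHermitian_conjTranspose_mul_mul U hHerm, ?_, ?_⟩
  · rw [conjTranspose_mul_mul_mul_conjTranspose_mul_mul hU, hIdem]
  · have hdet : IsUnit U.det := UnitaryGroup.det_isUnit ⟨U, hU⟩
    have hdetH : IsUnit Uᴴ.det := by simpa [det_conjTranspose] using hdet.star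
    rw [rank_mul_eq_left_of_isUnit_det _ _ hdet, rank_mul_eq_right_of_isUnit_det _ _ hdetH, hRank]

lemma Realizes.unitary_conj {n : ℕ} {G : SimpleGraph (Fin n)}
    {P : Fin n → Matrix (Fin d) (Fin d) ℂ} (hU : U ∈ unitaryGroup (Fin d) ℂ) (hP : Realizes G P) :
    Realizes G fun k => Uᴴ * P k * U := fun j k hjk => by
  rw [conjTranspose_mul_mul_mul_conjTranspose_mul_mul hU, hP j k hjk, Matrix.mul_zero,
    Matrix.zero_mul]

end UnitaryConj

lemma score_conj {n d : ℕ} (c : Fin n → ℝ) (P : Fin n → Matrix (Fin d) (Fin d) ℂ)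
    (U ρ : Matrix (Fin d) (Fin d) ℂ) :
    score c P (U * ρ * Uᴴ) = score c (fun k => Uᴴ * P k * U) ρ := by
  refine Finset.sum_congr rfl fun k _ => ?_
  rw [← Matrix.mul_assoc, trace_mul_comm]
  simp only [Matrix.mul_assoc]

lemma score_sum_smul {n d m : ℕ} (c : Fin n → ℝ) (P : Fin n → Matrix (Fin d) (Fin d) ℂ)
    (p : Fin m → ℝ) (σ : Fin m → Matrix (Fin d) (Fin d) ℂ) :
    score c P (∑ j, p j • σ j) = ∑ j, p j * score c P (σ j) := by
  simp only [score, trace_sum, Matrix.mul_smul, trace_smul, Complex.re_sum,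
    Complex.smul_re, smul_eq_mul, Finset.mul_sum]
  rw [Finset.sum_comm]
  exact Finset.sum_congr rfl fun _ _ => Finset.sum_congr rfl fun _ _ => by ring

lemma exists_weighted_sum_le {ι : Type*} [Fintype ι] {w f : ι → ℝ} (hw₀ : ∀ i, 0 ≤ w i)
    (hw₁ : ∑ i, w i = 1) : ∃ i, ∑ j, w j * f j ≤ f i := by
  obtain ⟨i, -, hi⟩ := (convexOn_id convex_univ).exists_ge_of_centerMass (t := Finset.univ)
    (fun i _ => hw₀ i) (hw₁ ▸ zero_lt_one) fun i _ => Set.mem_univ (f i)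
  exact ⟨i, by simpa [Finset.centerMass_eq_of_sum_1 _ _ hw₁] using hi⟩

theorem stmt8_general {n d : ℕ} (G : SimpleGraph (Fin n)) (r : ℕ)
    (c : Fin n → ℝ) (ρ₁ ρ₂ : Matrix (Fin d) (Fin d) ℂ)
    (m : ℕ) (p : Fin m → ℝ) (hp : ∀ j, 0 ≤ p j) (hps : ∑ j, p j = 1)
    (U : Fin m → Matrix (Fin d) (Fin d) ℂ)
    (hU : ∀ j, U j ∈ Matrix.unitaryGroup (Fin d) ℂ)
    (hmix : ρ₁ = ∑ j : Fin m, p j • (U j * ρ₂ * (U j)ᴴ)) :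
    ∀ P : Fin n → Matrix (Fin d) (Fin d) ℂ,
      (∀ k, IsProjOfRank r (P k)) → Realizes G P →
        ∃ P' : Fin n → Matrix (Fin d) (Fin d) ℂ,
          (∀ k, IsProjOfRank r (P' k)) ∧ Realizes G P' ∧
          ∑ k : Fin n, c k * ((P k * ρ₁).trace).re ≤
            ∑ k : Fin n, c k * ((P' k * ρ₂).trace).re := by
  intro P hP hReal
  obtain ⟨j, hj⟩ := exists_weighted_sum_le (f := fun j => score c P (U j * ρ₂ * (U j)ᴴ)) hp hps
  refine ⟨fun k => (U j)ᴴ * P k * U j, fun k => (hP k).unitary_conj (hU j),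
    hReal.unitary_conj (hU j), ?_⟩
  change score c P ρ₁ ≤ score c _ ρ₂
  rwa [hmix, score_sum_smul, ← score_conj]

theorem stmt8 {n d : ℕ} (G : SimpleGraph (Fin n)) (r : ℕ) (hd : 1 ≤ d) (hr : 1 ≤ r)
    (c : Fin n → ℝ) (ρ₁ ρ₂ : Matrix (Fin d) (Fin d) ℂ)
    (h₁ : ρ₁.IsHermitian) (h₂ : ρ₂.IsHermitian)
    (m : ℕ) (p : Fin m → ℝ) (hp : ∀ j, 0 ≤ p j) (hps : ∑ j, p j = 1)
    (U : Fin m → Matrix (Fin d) (Fin d) ℂ)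
    (hU : ∀ j, U j ∈ Matrix.unitaryGroup (Fin d) ℂ)
    (hmix : ρ₁ = ∑ j : Fin m, p j • (U j * ρ₂ * (U j)ᴴ)) :
    ∀ P : Fin n → Matrix (Fin d) (Fin d) ℂ,
      (∀ k, IsProjOfRank r (P k)) → Realizes G P →
        ∃ P' : Fin n → Matrix (Fin d) (Fin d) ℂ,
          (∀ k, IsProjOfRank r (P' k)) ∧ Realizes G P' ∧
          ∑ k : Fin n, c k * ((P k * ρ₁).trace).re ≤
            ∑ k : Fin n, c k * ((P' k * ρ₂).trace).re :=
  stmt8_general G r c ρ₁ ρ₂ m p hp hps U hU hmix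
end

section
/- Let G be a finite simple graph on Fin n, let d ≥ 1, r ≥ 1, and let c : Fin n → ℝ be arbitrary real coefficients. Let ρ be any density matrix on ℂ^d. Then for every family Π : Fin n → Matrix (Fin d) (Fin d) ℂ of rank-r orthogonal projections realizing G, there exists a family Π' of rank-r orthogonal projections realizing G such that ∑_k c_k · Re(tr(Π'_k * ρ)) ≥ (r/d) · ∑_k c_k. (The value of any noncontextuality inequality functional at the maximally mixed state, which equals (r/d)·∑_k c_k for every realization, is a lower bound for its optimized value at every state: the maximally mixed state is the least contextual state.) -/
open Matrix
open scoped ComplexOrder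

/-! The maximally mixed state is a uniform mixture of unitary conjugates of `ρ`: writing
`ρ = V D V⋆` with `D` diagonal, the conjugates `V X D X⋆ V⋆` by the `d` cyclic shift matrices `X`
average to `(tr ρ / d) • 1`. The objective `∑ₖ cₖ Re tr(Πₖ ρ)` is linear in `ρ`, and evaluating it
at `u ρ u⋆` is the same as evaluating it at `ρ` for the realization `u⋆ Πₖ u`, which still consists
of rank-`r` projections realizing `G`. Averaging over the mixture gives `(r / d) ∑ₖ cₖ`, so one of
these conjugated realizations does at least as well. -/

open Unitary

variable {m 𝕜 : Type*} [Fintype m] [DecidableEq m]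

theorem Matrix.permMatrix_mul_diagonal_mul_star [CommRing 𝕜] [StarRing 𝕜] (σ : Equiv.Perm m)
    (v : m → 𝕜) :
    σ.permMatrix 𝕜 * diagonal v * star (σ.permMatrix 𝕜) = diagonal (v ∘ σ) := by
  rw [star_eq_conjTranspose, conjTranspose_permMatrix, Equiv.Perm.permMatrix,
    Equiv.Perm.permMatrix, PEquiv.toMatrix_toPEquiv_mul, PEquiv.mul_toMatrix_toPEquiv,
    Equiv.Perm.inv_def, Equiv.symm_symm, submatrix_submatrix]
  exact submatrix_diagonal_equiv v σ

theorem Equiv.Perm.permMatrix_mem_unitary [CommRing 𝕜] [StarRing 𝕜] (σ : Equiv.Perm m) :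
    σ.permMatrix 𝕜 ∈ unitary (Matrix m m 𝕜) := by
  rw [Unitary.mem_iff, star_eq_conjTranspose, conjTranspose_permMatrix, ← permMatrix_mul,
    ← permMatrix_mul, mul_inv_cancel, inv_mul_cancel, permMatrix_one]
  exact ⟨rfl, rfl⟩

variable (𝕜) in
def Equiv.Perm.permUnitary [CommRing 𝕜] [StarRing 𝕜] (σ : Equiv.Perm m) : unitary (Matrix m m 𝕜) :=
  ⟨σ.permMatrix 𝕜, σ.permMatrix_mem_unitary⟩

theorem Matrix.sum_conjStarAlgAut_permUnitary_addRight_diagonal [CommRing 𝕜] [StarRing 𝕜]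
    [AddGroup m] (v : m → 𝕜) :
    ∑ a : m, conjStarAlgAut 𝕜 _ ((Equiv.addRight a).permUnitary 𝕜) (diagonal v) =
      (∑ i, v i) • 1 := by
  ext i j
  simp only [conjStarAlgAut_apply, Equiv.Perm.permUnitary, permMatrix_mul_diagonal_mul_star,
    sum_apply, smul_apply, diagonal_apply, one_apply, smul_eq_mul, mul_ite, mul_one, mul_zero]
  split_ifs
  · exact Equiv.sum_comp (Equiv.addLeft i) v
  · exact Finset.sum_const_zero

theorem Matrix.IsHermitian.exists_sum_conjStarAlgAut_eq_trace_smul_one [RCLike 𝕜] [AddGroup m]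
    {ρ : Matrix m m 𝕜} (hρ : ρ.IsHermitian) :
    ∃ u : m → unitary (Matrix m m 𝕜), ∑ a, conjStarAlgAut 𝕜 _ (u a) ρ = ρ.trace • 1 := by
  set V := hρ.eigenvectorUnitary
  refine ⟨fun a => V * (Equiv.addRight a).permUnitary 𝕜 * star V, ?_⟩
  simp only [conjStarAlgAut_mul_apply, conjStarAlgAut_star_eigenvectorUnitary, V, ← map_sum,
    sum_conjStarAlgAut_permUnitary_addRight_diagonal, map_smul, map_one,
    hρ.trace_eq_sum_eigenvalues, Function.comp_apply]

theorem Matrix.exists_le_re_trace_conjStarAlgAut_star_mul [RCLike 𝕜] {ι : Type*} [Fintype ι]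
    [Nonempty ι] {u : ι → unitary (Matrix m m 𝕜)} {ρ : Matrix m m 𝕜} {c : 𝕜}
    (h : ∑ i, conjStarAlgAut 𝕜 _ (u i) ρ = c • 1) (A : Matrix m m 𝕜) :
    ∃ i, RCLike.re (c * A.trace) / Fintype.card ι ≤
      RCLike.re (conjStarAlgAut 𝕜 _ (star (u i)) A * ρ).trace := by
  have hsum : ∑ i, (conjStarAlgAut 𝕜 _ (star (u i)) A * ρ).trace = c * A.trace := by
    calc ∑ i, (conjStarAlgAut 𝕜 _ (star (u i)) A * ρ).trace
        = ∑ i, (A * conjStarAlgAut 𝕜 _ (u i) ρ).trace := by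
          refine Finset.sum_congr rfl fun i _ => ?_
          simp only [conjStarAlgAut_apply, Unitary.coe_star, star_star, Matrix.mul_assoc]
          rw [trace_mul_comm]
          simp only [Matrix.mul_assoc]
      _ = c * A.trace := by
          rw [← trace_sum, ← Finset.mul_sum, h, Matrix.mul_smul, Matrix.mul_one, trace_smul,
            smul_eq_mul]
  obtain ⟨i, -, hi⟩ := Finset.exists_le_of_sum_le Finset.univ_nonempty
    (f := fun _ => RCLike.re (c * A.trace) / Fintype.card ι)
    (g := fun i => RCLike.re (conjStarAlgAut 𝕜 _ (star (u i)) A * ρ).trace) (by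
      rw [Finset.sum_const, Finset.card_univ, nsmul_eq_mul, ← map_sum, hsum,
        mul_div_cancel₀ _ (Nat.cast_ne_zero.mpr Fintype.card_ne_zero)])
  exact ⟨i, hi⟩

theorem Matrix.trace_eq_rank_of_isIdempotentElem_s9 {K : Type*} [Field K] {A : Matrix m m K}
    (hA : IsIdempotentElem A) : A.trace = A.rank := by
  have hA' : IsIdempotentElem A.toLin' := hA.map Matrix.toLinAlgEquiv'
  rw [← Matrix.trace_toLin'_eq, (LinearMap.IsIdempotentElem.isProj_range _ hA').trace,
    Matrix.rank, Matrix.toLin'_apply']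

namespace IsProjOfRank

variable {d r : ℕ} {P : Matrix (Fin d) (Fin d) ℂ}

theorem trace_eq (hP : IsProjOfRank r P) : P.trace = r := by
  rw [trace_eq_rank_of_isIdempotentElem_s9 hP.2.1, hP.2.2]

theorem map_conjStarAlgAut (hP : IsProjOfRank r P) (u : unitary (Matrix (Fin d) (Fin d) ℂ)) :
    IsProjOfRank r (conjStarAlgAut ℂ _ u P) := by
  obtain ⟨hherm, hidem, hrank⟩ := hP
  refine ⟨hherm.isSelfAdjoint.map (conjStarAlgAut ℂ _ u), by rw [← map_mul, hidem], ?_⟩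
  rw [conjStarAlgAut_apply, ← Unitary.coe_star,
    rank_mul_eq_left_of_isUnit_det _ _ (UnitaryGroup.det_isUnit (star u)),
    rank_mul_eq_right_of_isUnit_det _ _ (UnitaryGroup.det_isUnit u), hrank]

end IsProjOfRank

theorem Realizes.map_conjStarAlgAut {n d : ℕ} {G : SimpleGraph (Fin n)}
    {P : Fin n → Matrix (Fin d) (Fin d) ℂ} (hP : Realizes G P)
    (u : unitary (Matrix (Fin d) (Fin d) ℂ)) :
    Realizes G (fun k => conjStarAlgAut ℂ _ u (P k)) := fun j k hjk => by
  rw [← map_mul, hP j k hjk, map_zero]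

theorem stmt9_general {n d : ℕ} (G : SimpleGraph (Fin n)) (r : ℕ) (hd : 1 ≤ d)
    (c : Fin n → ℝ) (ρ : Matrix (Fin d) (Fin d) ℂ) (hρ : ρ.PosSemidef) (htr : ρ.trace = 1) :
    ∀ P : Fin n → Matrix (Fin d) (Fin d) ℂ,
      (∀ k, IsProjOfRank r (P k)) → Realizes G P →
        ∃ P' : Fin n → Matrix (Fin d) (Fin d) ℂ,
          (∀ k, IsProjOfRank r (P' k)) ∧ Realizes G P' ∧
          (r : ℝ) / d * ∑ k : Fin n, c k ≤ ∑ k : Fin n, c k * ((P' k * ρ).trace).re := by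
  intro P hP hreal
  have : NeZero d := ⟨by omega⟩
  obtain ⟨u, hu⟩ := hρ.isHermitian.exists_sum_conjStarAlgAut_eq_trace_smul_one
  obtain ⟨a, ha⟩ := exists_le_re_trace_conjStarAlgAut_star_mul hu (∑ k, (c k : ℂ) • P k)
  refine ⟨fun k => conjStarAlgAut ℂ _ (star (u a)) (P k), fun k => (hP k).map_conjStarAlgAut _,
    hreal.map_conjStarAlgAut _, ?_⟩
  calc (r : ℝ) / d * ∑ k, c k
      = RCLike.re (ρ.trace * (∑ k, (c k : ℂ) • P k).trace) / Fintype.card (Fin d) := by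
        simp only [htr, one_mul, trace_sum, trace_smul, (hP _).trace_eq, Fintype.card_fin]
        simp [← Finset.sum_mul]
        ring
    _ ≤ _ := ha
    _ = ∑ k, c k * ((conjStarAlgAut ℂ _ (star (u a)) (P k) * ρ).trace).re := by
        simp [map_sum, Finset.sum_mul, trace_sum]

theorem stmt9 {n d : ℕ} (G : SimpleGraph (Fin n)) (r : ℕ) (hd : 1 ≤ d) (hr : 1 ≤ r)
    (c : Fin n → ℝ) (ρ : Matrix (Fin d) (Fin d) ℂ) (hρ : ρ.PosSemidef) (htr : ρ.trace = 1) :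
    ∀ P : Fin n → Matrix (Fin d) (Fin d) ℂ,
      (∀ k, IsProjOfRank r (P k)) → Realizes G P →
        ∃ P' : Fin n → Matrix (Fin d) (Fin d) ℂ,
          (∀ k, IsProjOfRank r (P' k)) ∧ Realizes G P' ∧
          (r : ℝ) / d * ∑ k : Fin n, c k ≤ ∑ k : Fin n, c k * ((P' k * ρ).trace).re :=
  stmt9_general G r hd c ρ hρ htr
end

section
/- Let G be a finite simple graph on Fin n, let d ≥ 1, and let Π : Fin n → Matrix (Fin d) (Fin d) ℂ be a family of orthogonal projections realizing G (Π j * Π k = 0 whenever j and k are adjacent). Then for every clique K of G (a set of pairwise adjacent vertices) and every density matrix ρ on ℂ^d, ∑_{k ∈ K} Re(tr(Π_k * ρ)) ≤ 1. (The quantum probability vector satisfies all clique constraints, i.e., lies in QSTAB(G).) -/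
open Matrix
open scoped ComplexOrder

/-!
Pairwise orthogonal projections sum to a projection, so along a clique `K` the sum
`Q = ∑_{k ∈ K} Π_k` is a projection. Then `1 - Q` is a projection as well, and
`tr ρ - tr (Q ρ) = tr ((1 - Q) ρ (1 - Q))` is the trace of a positive semidefinite matrix.
-/

theorem IsStarProjection.sum {ι R : Type*} [NonUnitalNonAssocSemiring R] [StarRing R]
    {s : Finset ι} {p : ι → R} (hp : ∀ i ∈ s, IsStarProjection (p i))
    (horth : (s : Set ι).Pairwise fun i j => p i * p j = 0) :
    IsStarProjection (∑ i ∈ s, p i) := by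
  classical
  induction s using Finset.induction_on with
  | empty => simp
  | insert a s ha ih =>
    rw [Finset.sum_insert ha]
    simp only [Finset.mem_insert, forall_eq_or_imp] at hp
    rw [Finset.coe_insert, Set.pairwise_insert] at horth
    refine hp.1.add (ih hp.2 horth.1) ?_
    rw [Finset.mul_sum]
    exact Finset.sum_eq_zero fun i hi => (horth.2 i hi (ne_of_mem_of_not_mem hi ha).symm).1

namespace Matrix

variable {n R : Type*} [Fintype n] [CommRing R] [PartialOrder R] [StarRing R] [AddLeftMono R]

theorem PosSemidef.trace_mul_nonneg_of_isStarProjection {A E : Matrix n n R}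
    (hA : A.PosSemidef) (hE : IsStarProjection E) : 0 ≤ (E * A).trace := by
  have hconj : (E * A).trace = (Eᴴ * A * E).trace := by
    rw [← star_eq_conjTranspose, hE.isSelfAdjoint.star_eq, trace_mul_cycle,
      hE.isIdempotentElem.eq]
  rw [hconj]
  exact (hA.conjTranspose_mul_mul_same E).trace_nonneg

theorem PosSemidef.trace_mul_le_trace_of_isStarProjection [DecidableEq n] {A E : Matrix n n R}
    (hA : A.PosSemidef) (hE : IsStarProjection E) : (E * A).trace ≤ A.trace := by
  have := hA.trace_mul_nonneg_of_isStarProjection hE.one_sub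
  rwa [sub_mul, one_mul, trace_sub, sub_nonneg] at this

end Matrix

theorem stmt11_general {n d : ℕ} (G : SimpleGraph (Fin n))
    (P : Fin n → Matrix (Fin d) (Fin d) ℂ)
    (hP : ∀ k, (P k).IsHermitian ∧ P k * P k = P k) (hreal : Realizes G P) :
    ∀ K : Finset (Fin n), G.IsClique (K : Set (Fin n)) →
      ∀ ρ : Matrix (Fin d) (Fin d) ℂ, ρ.PosSemidef → ρ.trace = 1 →
        ∑ k ∈ K, ((P k * ρ).trace).re ≤ 1 := by
  intro K hK ρ hρ hρ1
  have hQ : IsStarProjection (∑ k ∈ K, P k) :=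
    IsStarProjection.sum (fun k _ => ⟨(hP k).2, (hP k).1⟩) (hK.mono' hreal)
  have hle := hρ.trace_mul_le_trace_of_isStarProjection hQ
  rw [Finset.sum_mul, trace_sum, hρ1] at hle
  simpa using (Complex.le_def.mp hle).1

theorem stmt11 {n d : ℕ} (G : SimpleGraph (Fin n)) (hd : 1 ≤ d)
    (P : Fin n → Matrix (Fin d) (Fin d) ℂ)
    (hP : ∀ k, (P k).IsHermitian ∧ P k * P k = P k) (hreal : Realizes G P) :
    ∀ K : Finset (Fin n), G.IsClique (K : Set (Fin n)) →
      ∀ ρ : Matrix (Fin d) (Fin d) ℂ, ρ.PosSemidef → ρ.trace = 1 →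
        ∑ k ∈ K, ((P k * ρ).trace).re ≤ 1 :=
  stmt11_general G P hP hreal
end
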